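/- arXiv:2010.13098 — 2 statements merged into one kernel-verified Lean document; each statement's English description precedes it below -/
import Mathlib

section
/- The map R : ℓ_∞(Γ) → c₀(Γ) defined coordinatewise by (R(x))_i = 0 if |x_i| < d(x), and (R(x))_i = (|x_i| − d(x))·sign(x_i) if |x_i| ≥ d(x), is well defined (its values lie in c₀(Γ)), fixes every point of c₀(Γ), and is 2-Lipschitz. In particular c₀(Γ) is a 2-Lipschitz retract of ℓ_∞(Γ). -/
/-!
`R` is soft thresholding at level `d(x)`: each coordinate is moved towards `0` by `d(x)`, and
set to `0` if that would cross it, i.e. `(R x)_i = x_i - clamp_{[-d(x), d(x)]}(x_i)`.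

* If `a ∈ c₀(Γ)` is `δ`-close to `x` with `δ < d(x) + ε/2`, then `|(R x)_i| ≥ ε` forces
  `|a_i| ≥ d(x) + ε - δ > ε/2`, which happens for finitely many `i` only; so `R x ∈ c₀(Γ)`.
* On `c₀(Γ)` the threshold `d` vanishes, so `R` is the identity there.
* Clamping is `1`-Lipschitz jointly in the level and the point (for the sup of the two
  increments), and `d` is `1`-Lipschitz, so each coordinate of `R x - R y` is bounded by
  `‖x - y‖ + max |d(x) - d(y)| ‖x - y‖ ≤ 2 ‖x - y‖`.
-/

open scoped NNReal ENNReal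

noncomputable section

/-- The subset of `ℓ∞(Γ)` consisting of functions vanishing at infinity, i.e. `c₀(Γ)`. -/
def c0set (Γ : Type*) : Set (lp (fun _ : Γ => ℝ) ∞) :=
  {a | ∀ ε : ℝ, 0 < ε → {i : Γ | ε ≤ |a i|}.Finite}

open Metric

def softThresh (d t : ℝ) : ℝ := t - max (-d) (min d t)

theorem softThresh_eq_ite {d : ℝ} (hd : 0 ≤ d) (t : ℝ) :
    softThresh d t = if |t| < d then 0 else (|t| - d) * Real.sign t := by
  unfold softThresh
  split_ifs with h
  · rw [abs_lt] at h
    rw [min_eq_right h.2.le, max_eq_right h.1.le, sub_self]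
  · push Not at h
    rcases lt_trichotomy t 0 with ht | rfl | ht
    · rw [abs_of_neg ht] at h
      rw [Real.sign_of_neg ht, abs_of_neg ht, min_eq_right (by linarith),
        max_eq_left (by linarith)]
      ring
    · obtain rfl : d = 0 := le_antisymm (by simpa using h) hd
      simp
    · rw [abs_of_pos ht] at h
      rw [Real.sign_of_pos ht, abs_of_pos ht, min_eq_left h, max_eq_right (by linarith)]
      ring

theorem abs_softThresh {d : ℝ} (hd : 0 ≤ d) (t : ℝ) : |softThresh d t| = max (|t| - d) 0 := by
  unfold softThresh
  rcases le_total t (-d) with h | h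
  · rw [min_eq_right (by linarith), max_eq_left h, abs_of_nonpos (by linarith),
      abs_of_nonpos (by linarith), max_eq_left (by linarith)]
    ring
  rcases le_total t d with h' | h'
  · rw [min_eq_right h', max_eq_right h, sub_self, abs_zero, eq_comm, max_eq_right_iff]
    linarith [abs_le.2 ⟨h, h'⟩]
  · rw [min_eq_left h', max_eq_right (by linarith), abs_of_nonneg (by linarith),
      abs_of_nonneg (by linarith), max_eq_left (by linarith)]

theorem abs_softThresh_le (d t : ℝ) : |softThresh d t| ≤ |t| + |d| := by
  have hclamp : |max (-d) (min d t)| ≤ |d| := abs_le.2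
    ⟨(neg_le_neg (le_abs_self d)).trans (le_max_left _ _),
      max_le (neg_le_abs d) ((min_le_left _ _).trans (le_abs_self d))⟩
  exact (abs_sub _ _).trans (by linarith)

theorem abs_softThresh_sub_softThresh_le (d e s t : ℝ) :
    |softThresh d s - softThresh e t| ≤ |s - t| + max |d - e| |s - t| := by
  have hclamp : |max (-d) (min d s) - max (-e) (min e t)| ≤ max |d - e| |s - t| := by
    refine (abs_max_sub_max_le_max _ _ _ _).trans (max_le ?_ (abs_min_sub_min_le_max _ _ _ _))
    rw [← abs_neg, neg_sub, sub_neg_eq_add, neg_add_eq_sub]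
    exact le_max_left _ _
  calc |softThresh d s - softThresh e t|
      = |(s - t) - (max (-d) (min d s) - max (-e) (min e t))| := by unfold softThresh; ring_nf
    _ ≤ |s - t| + max |d - e| |s - t| := (abs_sub _ _).trans (by linarith)

@[simp]
theorem softThresh_zero_left (t : ℝ) : softThresh 0 t = t := by
  rcases le_total t 0 with h | h <;> simp [softThresh, h]

namespace lp

variable {Γ : Type*}

theorem abs_apply_le_norm (x : lp (fun _ : Γ => ℝ) ∞) (i : Γ) : |x i| ≤ ‖x‖ :=
  norm_apply_le_norm ENNReal.top_ne_zero x i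

theorem abs_apply_sub_le_dist (x y : lp (fun _ : Γ => ℝ) ∞) (i : Γ) : |x i - y i| ≤ dist x y := by
  simpa only [dist_eq_norm, coeFn_sub, Pi.sub_apply] using abs_apply_le_norm (x - y) i

def softThresh (d : ℝ) (x : lp (fun _ : Γ => ℝ) ∞) : lp (fun _ : Γ => ℝ) ∞ :=
  ⟨fun i => _root_.softThresh d (x i), memℓp_infty ⟨‖x‖ + |d|, by
    rintro - ⟨i, rfl⟩
    exact (abs_softThresh_le d (x i)).trans (by linarith [abs_apply_le_norm x i])⟩⟩

@[simp]
theorem softThresh_apply (d : ℝ) (x : lp (fun _ : Γ => ℝ) ∞) (i : Γ) :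
    softThresh d x i = _root_.softThresh d (x i) := rfl

@[simp]
theorem softThresh_zero_left (x : lp (fun _ : Γ => ℝ) ∞) : softThresh 0 x = x := by
  ext i
  simp

theorem dist_softThresh_softThresh_le (d e : ℝ) (x y : lp (fun _ : Γ => ℝ) ∞) :
    dist (softThresh d x) (softThresh e y) ≤ dist x y + max |d - e| (dist x y) := by
  rw [dist_eq_norm]
  refine norm_le_of_forall_le (by positivity) fun i => ?_
  rw [coeFn_sub, Pi.sub_apply, softThresh_apply, softThresh_apply, Real.norm_eq_abs]
  have hi := abs_apply_sub_le_dist x y i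
  exact (abs_softThresh_sub_softThresh_le d e (x i) (y i)).trans
    (add_le_add hi (max_le_max le_rfl hi))

theorem lipschitzWith_two_softThresh_comp {f : lp (fun _ : Γ => ℝ) ∞ → ℝ}
    (hf : LipschitzWith 1 f) : LipschitzWith 2 fun x => softThresh (f x) x := by
  refine LipschitzWith.of_dist_le_mul fun x y => ?_
  have hfxy : |f x - f y| ≤ dist x y := by
    simpa [Real.dist_eq] using hf.dist_le_mul x y
  calc dist (softThresh (f x) x) (softThresh (f y) y)
      ≤ dist x y + max |f x - f y| (dist x y) := dist_softThresh_softThresh_le _ _ x y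
    _ ≤ 2 * dist x y := by rw [max_eq_right hfxy]; linarith

end lp

section c0

variable {Γ : Type*}

theorem zero_mem_c0set : (0 : lp (fun _ : Γ => ℝ) ∞) ∈ c0set Γ := fun ε hε => by
  simp [not_le.2 hε]

theorem softThresh_mem_c0set {x : lp (fun _ : Γ => ℝ) ∞} {d : ℝ}
    (hd : infDist x (c0set Γ) ≤ d) : lp.softThresh d x ∈ c0set Γ := by
  intro ε hε
  have hd0 : 0 ≤ d := infDist_nonneg.trans hd
  obtain ⟨a, ha, hxa⟩ := (infDist_lt_iff ⟨0, zero_mem_c0set⟩).1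
    (by linarith : infDist x (c0set Γ) < d + ε / 2)
  refine (ha (ε / 2) (by linarith)).subset fun i hi => ?_
  simp only [Set.mem_ofPred_eq, lp.softThresh_apply, abs_softThresh hd0] at hi ⊢
  have hxi : d + ε ≤ |x i| := by
    rcases max_cases (|x i| - d) 0 with ⟨h, _⟩ | ⟨h, _⟩ <;> rw [h] at hi <;> linarith
  linarith [abs_sub_abs_le_abs_sub (x i) (a i), lp.abs_apply_sub_le_dist x a i]

end c0

theorem stmt1_general (Γ : Type*) :
    ∃ R : lp (fun _ : Γ => ℝ) ∞ → lp (fun _ : Γ => ℝ) ∞,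
      (∀ x i, (R x : ∀ _ : Γ, ℝ) i =
          if |x i| < Metric.infDist x (c0set Γ) then 0
          else (|x i| - Metric.infDist x (c0set Γ)) * Real.sign (x i)) ∧
      (∀ x, R x ∈ c0set Γ) ∧ (∀ a ∈ c0set Γ, R a = a) ∧ LipschitzWith 2 R := by
  refine ⟨fun x => lp.softThresh (infDist x (c0set Γ)) x, fun x i => ?_,
    fun x => softThresh_mem_c0set le_rfl, fun a ha => ?_,
    lp.lipschitzWith_two_softThresh_comp (lipschitz_infDist_pt _)⟩
  · exact softThresh_eq_ite infDist_nonneg (x i)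
  · simp only [infDist_zero_of_mem ha, lp.softThresh_zero_left]

/-- The map `R : ℓ∞(Γ) → c₀(Γ)`, `(R x)_i = 0` if `|x_i| < d(x, c₀)` and
`(|x_i| - d(x, c₀))·sign x_i` otherwise, is well defined (valued in `c₀(Γ)`),
fixes every point of `c₀(Γ)`, and is `2`-Lipschitz; in particular `c₀(Γ)` is a
`2`-Lipschitz retract of `ℓ∞(Γ)`. -/
theorem stmt1 (Γ : Type*) [Infinite Γ] :
    ∃ R : lp (fun _ : Γ => ℝ) ∞ → lp (fun _ : Γ => ℝ) ∞,
      (∀ x i, (R x : ∀ _ : Γ, ℝ) i =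
          if |x i| < Metric.infDist x (c0set Γ) then 0
          else (|x i| - Metric.infDist x (c0set Γ)) * Real.sign (x i)) ∧
      (∀ x, R x ∈ c0set Γ) ∧ (∀ a ∈ c0set Γ, R a = a) ∧ LipschitzWith 2 R :=
  stmt1_general Γ
end
end

section
/- Let E be the closed linear span in ℓ_∞ of the canonical copy of c (convergent sequences) together with the characteristic functions χ_{N_i} of an almost disjoint family {N_i : i ∈ I} of infinite subsets of ℕ. Then E is isometrically isomorphic to C(K_E) for a compact Hausdorff space K_E which is scattered of Cantor–Bendixson height 3 (a Mrówka–Isbell compactum). -/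
/-!
`K_E` is the one-point compactification of Mrówka's space `Ψ(A) = ℕ ∪ A`, in which the points of
`ℕ` are isolated and `a ∈ A` is the limit of the sequence `a ⊆ ℕ`. `Ψ(A)` is locally compact,
and Hausdorff because `A` is almost disjoint, so `K_E` is compact Hausdorff. Its isolated points
are those of `ℕ`, the isolated points of what remains are those of `A`, and then only `∞` is left.

Since `ℕ` is dense in `K_E`, restriction to `ℕ` is a linear isometry `C(K_E) → ℓ∞`. Its image is
closed and contains `c` and every `χ_a` (the restriction of the indicator of the clopen set
`{a} ∪ a`), hence contains `E`. Conversely, given `f` and `ε > 0`, only finitely many `a` have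
`|f a - f ∞| ≥ ε`; after subtracting `f ∞` and the corresponding multiples of `χ_a`, the remainder
is `≥ ε` only on a compact set of isolated points, which is finite and is removed by a finitely
supported correction. So the restriction of `f` is within `ε` of the span of the generators.
-/

open scoped NNReal ENNReal Classical

noncomputable section

def cbDeriv {K : Type*} [TopologicalSpace K] (s : Set K) : Set K :=
  {x ∈ s | x ∈ closure (s \ {x})}

open Set Filter Topology

local notation "ℓ∞" => lp (fun _ : ℕ => ℝ) ∞

theorem cbDeriv_univ_eq {X : Type*} [TopologicalSpace X] :
    cbDeriv (univ : Set X) = {x | ¬IsOpen {x}} := by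
  ext x
  simp [cbDeriv, ← compl_eq_univ_sdiff, closure_compl, mem_interior_iff_mem_nhds,
    isOpen_iff_mem_nhds]

theorem cbDeriv_singleton {X : Type*} [TopologicalSpace X] (x : X) : cbDeriv {x} = ∅ := by
  ext y
  simp +contextual [cbDeriv]

theorem continuous_extend_zero_of_tendsto {X : Type*} [TopologicalSpace X] [T1Space X]
    {e : ℕ → X} (he : Function.Injective e) (hiso : ∀ n, IsOpen {e n}) {y : ℕ → ℝ}
    (hy : Tendsto y atTop (𝓝 0)) : Continuous (Function.extend e y 0) := by
  refine continuous_iff_continuousAt.2 fun x => ?_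
  by_cases hx : ∃ n, e n = x
  · obtain ⟨n, rfl⟩ := hx
    rw [ContinuousAt, (isOpen_singleton_iff_nhds_eq_pure _).1 (hiso n)]
    exact tendsto_pure_nhds _ _
  rw [ContinuousAt, Function.extend_apply' _ _ _ hx]
  refine Metric.tendsto_nhds.2 fun ε hε => ?_
  have hfin : {n | ε ≤ |y n|}.Finite := by
    simpa [← Nat.cofinite_eq_atTop, Real.dist_eq] using Metric.tendsto_nhds.1 hy ε hε
  filter_upwards [(hfin.image e).isClosed.isOpen_compl.mem_nhds
    fun ⟨n, _, hn⟩ => hx ⟨n, hn⟩] with z hz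
  by_cases hz' : ∃ n, e n = z
  · obtain ⟨n, rfl⟩ := hz'
    simpa [he.extend_apply, Real.dist_eq] using fun h => hz (mem_image_of_mem e h)
  · simpa [Function.extend_apply' _ _ _ hz'] using hε

namespace Mrowka

variable (A : Set (Set ℕ)) in
def generators : Set ℓ∞ :=
  {x | ∃ l : ℝ, Tendsto (fun n => x n) atTop (𝓝 l)} ∪
    {x | ∃ a ∈ A, ∀ n, x n = if n ∈ a then (1 : ℝ) else 0}

variable (A : Set (Set ℕ)) in
def subspace : Submodule ℝ ℓ∞ :=
  (Submodule.span ℝ (generators A)).topologicalClosure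

inductive Psi (A : Set (Set ℕ)) : Type
  | nat : ℕ → Psi A
  | ofSet : A → Psi A

namespace Psi

variable {A : Set (Set ℕ)}

instance : TopologicalSpace (Psi A) where
  IsOpen U := ∀ a : A, ofSet a ∈ U → ((a : Set ℕ) \ nat ⁻¹' U).Finite
  isOpen_univ _ _ := by simp
  isOpen_inter U V hU hV a ha := by
    refine ((hU a ha.1).union (hV a ha.2)).subset ?_
    rw [preimage_inter, sdiff_inter]
  isOpen_sUnion S hS := by
    rintro a ⟨U, hUS, haU⟩
    exact (hS U hUS a haU).subset
      (sdiff_subset_sdiff_right (preimage_mono (subset_sUnion_of_mem hUS)))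

theorem nat_injective : Function.Injective (nat : ℕ → Psi A) := fun _ _ => nat.inj

theorem isOpen_of_forall_ofSet_notMem {U : Set (Psi A)} (hU : ∀ a, ofSet a ∉ U) : IsOpen U :=
  fun a ha => (hU a ha).elim

theorem isOpen_insert_ofSet_image_nat {a : A} {s : Set ℕ} (hs : ((a : Set ℕ) \ s).Finite) :
    IsOpen (insert (ofSet a) (nat '' s)) := by
  rintro b (hb | ⟨n, -, hn⟩)
  · cases hb
    have : nat ⁻¹' insert (ofSet a) (nat '' s) = s := by ext; simp
    rwa [this]
  · cases hn

theorem finite_diff_preimage_of_mem_nhds {a : A} {U : Set (Psi A)} (hU : U ∈ 𝓝 (ofSet a)) :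
    ((a : Set ℕ) \ nat ⁻¹' U).Finite := by
  obtain ⟨V, hVU, hV, haV⟩ := mem_nhds_iff.mp hU
  exact (hV a haV).subset (sdiff_subset_sdiff_right (preimage_mono hVU))

theorem tendsto_nat_nhds_ofSet (a : A) :
    Tendsto (fun n : (a : Set ℕ) => nat n) cofinite (𝓝 (ofSet a)) := by
  intro U hU
  rw [mem_map, mem_cofinite]
  exact ((finite_diff_preimage_of_mem_nhds hU).preimage (f := Subtype.val (p := (· ∈ (a : Set ℕ))))
    Subtype.val_injective.injOn).subset fun n hn => ⟨n.2, hn⟩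

theorem isCompact_insert_ofSet_image_nat (a : A) : IsCompact (insert (ofSet a) (nat '' a)) := by
  simpa [image_eq_range] using (tendsto_nat_nhds_ofSet a).isCompact_insert_range_of_cofinite

theorem isOpen_singleton_nat (n : ℕ) : IsOpen ({nat n} : Set (Psi A)) :=
  isOpen_of_forall_ofSet_notMem (by simp)

instance : WeaklyLocallyCompactSpace (Psi A) where
  exists_compact_mem_nhds
    | nat n => ⟨{nat n}, isCompact_singleton, (isOpen_singleton_nat n).mem_nhds rfl⟩
    | ofSet a => ⟨_, isCompact_insert_ofSet_image_nat a,
        (isOpen_insert_ofSet_image_nat (by simp)).mem_nhds (mem_insert _ _)⟩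

theorem isOpen_compl_singleton_nat (n : ℕ) : IsOpen ({nat n}ᶜ : Set (Psi A)) :=
  fun _ _ => (finite_singleton n).subset fun k => by simp

theorem t2Space (hAD : A.Pairwise fun a b => (a ∩ b).Finite) : T2Space (Psi A) := by
  have sep_nat (n : ℕ) (y : Psi A) (hy : nat n ≠ y) :
      ∃ U ∈ 𝓝 (nat n), ∃ V ∈ 𝓝 y, Disjoint U V :=
    ⟨_, (isOpen_singleton_nat n).mem_nhds rfl, _, (isOpen_compl_singleton_nat n).mem_nhds hy.symm,
      disjoint_compl_right⟩
  rw [t2Space_iff_nhds]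
  rintro (n | a) y hxy
  · exact sep_nat n y hxy
  obtain (m | b) := y
  · obtain ⟨U, hU, V, hV, hUV⟩ := sep_nat m (ofSet a) hxy.symm
    exact ⟨V, hV, U, hU, hUV.symm⟩
  have hab : a ≠ b := fun h => hxy (h ▸ rfl)
  refine ⟨_, (isOpen_insert_ofSet_image_nat (s := (a : Set ℕ) \ b) ?_).mem_nhds (mem_insert _ _),
    _, (isOpen_insert_ofSet_image_nat (s := (b : Set ℕ)) (by simp)).mem_nhds (mem_insert _ _), ?_⟩
  · simpa [sdiff_sdiff_right_self] using hAD a.2 b.2 (Subtype.coe_ne_coe.mpr hab)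
  · rw [disjoint_insert_left, disjoint_insert_right, disjoint_image_iff nat_injective]
    simp [hab, disjoint_sdiff_left]

theorem isClosed_range_ofSet : IsClosed (range (ofSet : A → Psi A)) := by
  rw [← isOpen_compl_iff]
  exact isOpen_of_forall_ofSet_notMem (by simp)

theorem isDiscrete_range_ofSet : IsDiscrete (range (ofSet : A → Psi A)) := by
  rw [isDiscrete_iff_forall_mem_exists_isOpen]
  rintro _ ⟨a, rfl⟩
  refine ⟨_, isOpen_insert_ofSet_image_nat (a := a) (s := a) (by simp), ?_⟩
  ext x
  cases x <;> simp [eq_comm]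

theorem finite_preimage_ofSet_of_isCompact {C : Set (Psi A)} (hC : IsCompact C) :
    (ofSet ⁻¹' C).Finite := by
  have := (hC.inter_right isClosed_range_ofSet).finite
    (isDiscrete_range_ofSet.mono inter_subset_right)
  exact (this.preimage (fun _ _ _ _ h => ofSet.inj h)).subset fun a ha => ⟨ha, a, rfl⟩

theorem finite_of_isCompact_of_forall_ofSet_notMem {C : Set (Psi A)} (hC : IsCompact C)
    (h : ∀ a, ofSet a ∉ C) : C.Finite := by
  refine hC.finite (isDiscrete_iff_forall_mem_exists_isOpen.2 fun x hx => ⟨{x}, ?_, by simp [hx]⟩)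
  cases x with
  | nat n => exact isOpen_singleton_nat n
  | ofSet a => exact (h a hx).elim

theorem noncompactSpace (hA : A.Infinite) : NoncompactSpace (Psi A) :=
  ⟨fun h => hA (finite_coe_iff.mp (finite_univ_iff.mp (finite_preimage_ofSet_of_isCompact h)))⟩

theorem denseRange_nat (hinf : ∀ a ∈ A, a.Infinite) : DenseRange (nat : ℕ → Psi A) := by
  rintro (n | a)
  · exact subset_closure ⟨n, rfl⟩
  · have := (hinf a a.2).to_subtype
    exact mem_closure_of_tendsto (tendsto_nat_nhds_ofSet a) (.of_forall fun n => ⟨n, rfl⟩)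

end Psi

abbrev Compactum (A : Set (Set ℕ)) : Type := OnePoint (Psi A)

namespace Compactum

open OnePoint Psi

variable {A : Set (Set ℕ)}

theorem isOpen_singleton_nat (n : ℕ) : IsOpen {((nat n : Psi A) : Compactum A)} := by
  rw [← image_singleton]
  exact isOpen_image_coe.2 (Psi.isOpen_singleton_nat n)

theorem not_isOpen_singleton_ofSet {a : A} (ha : (a : Set ℕ).Infinite) :
    ¬IsOpen {((ofSet a : Psi A) : Compactum A)} := by
  intro h
  have := ha.to_subtype
  obtain ⟨n, hn⟩ := ((tendsto_nat_nhds_ofSet a).eventually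
    ((h.preimage continuous_coe).mem_nhds rfl)).exists
  simp at hn

theorem not_isOpen_singleton_infty (hA : A.Infinite) : ¬IsOpen {(∞ : Compactum A)} := by
  have := Psi.noncompactSpace hA
  rw [isOpen_singleton_iff_punctured_nhds]
  exact NeBot.ne inferInstance

theorem isOpen_of_forall_notMem {D : Set (Compactum A)} (hinfty : (∞ : Compactum A) ∉ D)
    (hD : ∀ a, ((ofSet a : Psi A) : Compactum A) ∉ D) : IsOpen D :=
  (isOpen_iff_of_notMem hinfty).2 (isOpen_of_forall_ofSet_notMem hD)

theorem finite_of_isClosed_of_forall_notMem {D : Set (Compactum A)} (hD : IsClosed D)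
    (hinfty : (∞ : Compactum A) ∉ D) (hset : ∀ a, ((ofSet a : Psi A) : Compactum A) ∉ D) :
    D.Finite := by
  have hC := finite_of_isCompact_of_forall_ofSet_notMem
    ((isClosed_iff_of_notMem hinfty).1 hD).2 hset
  refine (hC.image (↑)).subset fun x hx => ?_
  induction x using OnePoint.rec with
  | infty => exact (hinfty hx).elim
  | coe p => exact ⟨p, hx, rfl⟩

theorem finite_setOf_ofSet_mem {D : Set (Compactum A)} (hD : IsClosed D)
    (hinfty : (∞ : Compactum A) ∉ D) : {a | ((ofSet a : Psi A) : Compactum A) ∈ D}.Finite :=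
  finite_preimage_ofSet_of_isCompact ((isClosed_iff_of_notMem hinfty).1 hD).2

def nbhdOf (a : A) : Set (Compactum A) :=
  (↑) '' insert (ofSet a) (nat '' a)

@[simp]
theorem coe_nat_mem_nbhdOf {a : A} {n : ℕ} :
    ((nat n : Psi A) : Compactum A) ∈ nbhdOf a ↔ n ∈ (a : Set ℕ) :=
  coe_injective.mem_set_image.trans (by simp)

@[simp]
theorem coe_ofSet_mem_nbhdOf {a b : A} : ((ofSet b : Psi A) : Compactum A) ∈ nbhdOf a ↔ b = a :=
  coe_injective.mem_set_image.trans (by simp)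

@[simp]
theorem infty_notMem_nbhdOf {a : A} : (∞ : Compactum A) ∉ nbhdOf a :=
  infty_notMem_image_coe

theorem isOpen_nbhdOf (a : A) : IsOpen (nbhdOf a) :=
  isOpen_image_coe.2 (isOpen_insert_ofSet_image_nat (by simp))

theorem isClopen_nbhdOf (hAD : A.Pairwise fun a b => (a ∩ b).Finite) (a : A) :
    IsClopen (nbhdOf a) := by
  have := Psi.t2Space hAD
  have hC := isCompact_insert_ofSet_image_nat a
  exact ⟨isClosed_image_coe.2 ⟨hC.isClosed, hC⟩, isOpen_nbhdOf a⟩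

theorem cbDeriv_univ (hinf : ∀ a ∈ A, a.Infinite) (hA : A.Infinite) :
    cbDeriv (univ : Set (Compactum A)) =
      insert (∞ : Compactum A) (range fun a => ((ofSet a : Psi A) : Compactum A)) := by
  ext x
  rw [cbDeriv_univ_eq]
  induction x using OnePoint.rec with
  | infty => simpa using not_isOpen_singleton_infty hA
  | coe p =>
    cases p with
    | nat n => simpa using isOpen_singleton_nat n
    | ofSet a => simpa using not_isOpen_singleton_ofSet (hinf a a.2)

theorem cbDeriv_insert_infty_range_ofSet (hA : A.Infinite) :
    cbDeriv (insert (∞ : Compactum A) (range fun a => ((ofSet a : Psi A) : Compactum A))) =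
      {(∞ : Compactum A)} := by
  ext x
  simp only [cbDeriv, mem_ofPred_eq, mem_singleton_iff]
  constructor
  · rintro ⟨hxS | ⟨a, rfl⟩, hx⟩
    · exact hxS
    obtain ⟨y, hya, hyS, hy⟩ :=
      mem_closure_iff.1 hx _ (isOpen_nbhdOf a) (coe_ofSet_mem_nbhdOf.2 rfl)
    rcases hyS with rfl | ⟨b, rfl⟩
    · exact (infty_notMem_nbhdOf hya).elim
    · exact (hy (by simp [coe_ofSet_mem_nbhdOf.1 hya])).elim
  · rintro rfl
    refine ⟨mem_insert _ _, (mem_closure_iff_nhds_basis hasBasis_nhds_infty).2 ?_⟩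
    rintro C ⟨-, hC⟩
    have := hA.to_subtype
    obtain ⟨a, ha⟩ := (finite_preimage_ofSet_of_isCompact hC).exists_notMem
    exact ⟨_, ⟨mem_insert_of_mem _ ⟨a, rfl⟩, by simp⟩, Or.inl (mem_image_of_mem _ ha)⟩

theorem cbDeriv_cbDeriv_univ (hinf : ∀ a ∈ A, a.Infinite) (hA : A.Infinite) :
    cbDeriv (cbDeriv (univ : Set (Compactum A))) = {(∞ : Compactum A)} := by
  rw [cbDeriv_univ hinf hA, cbDeriv_insert_infty_range_ofSet hA]

variable (A) in
def restrictNat : C(Compactum A, ℝ) →ₗ[ℝ] ℓ∞ where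
  toFun f := ⟨fun n => f (nat n : Psi A), memℓp_infty ⟨‖f‖, by
    rintro _ ⟨n, rfl⟩
    exact f.norm_coe_le_norm _⟩⟩
  map_add' _ _ := rfl
  map_smul' _ _ := rfl

@[simp]
theorem restrictNat_apply (f : C(Compactum A, ℝ)) (n : ℕ) :
    restrictNat A f n = f (nat n : Psi A) :=
  rfl

theorem norm_restrictNat_le (f : C(Compactum A, ℝ)) : ‖restrictNat A f‖ ≤ ‖f‖ :=
  lp.norm_le_of_forall_le (norm_nonneg f) fun n => f.norm_coe_le_norm (nat n : Psi A)

theorem norm_restrictNat (hinf : ∀ a ∈ A, a.Infinite) (hA : A.Infinite)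
    (f : C(Compactum A, ℝ)) : ‖restrictNat A f‖ = ‖f‖ := by
  have := Psi.noncompactSpace hA
  have hdense : DenseRange fun n => ((nat n : Psi A) : Compactum A) :=
    denseRange_coe.comp (Psi.denseRange_nat hinf) continuous_coe
  refine (norm_restrictNat_le f).antisymm ((ContinuousMap.norm_le _ (norm_nonneg _)).2 fun x => ?_)
  exact hdense.induction_on x (isClosed_le (by fun_prop) continuous_const)
    fun n => lp.norm_apply_le_norm ENNReal.top_ne_zero (restrictNat A f) n

theorem exists_restrictNat_tendsto_zero_dist_le (h : C(Compactum A, ℝ)) {ε : ℝ} (hε : 0 < ε)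
    (h_infty : |h ∞| < ε) (h_ofSet : ∀ a, |h (ofSet a : Psi A)| < ε) :
    ∃ g, Tendsto (fun n => restrictNat A g n) atTop (𝓝 0) ∧ dist h g ≤ ε := by
  set D := {p | ε ≤ |h p|}
  have hD : IsClosed D := isClosed_le continuous_const (by fun_prop)
  have hD_infty : (∞ : Compactum A) ∉ D := not_le.2 h_infty
  have hD_ofSet (a : A) : ((ofSet a : Psi A) : Compactum A) ∉ D := not_le.2 (h_ofSet a)
  have hD_fin := finite_of_isClosed_of_forall_notMem hD hD_infty hD_ofSet
  refine ⟨⟨D.indicator h, IsClopen.continuous_indicator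
    ⟨hD, isOpen_of_forall_notMem hD_infty hD_ofSet⟩ h.continuous⟩, ?_, ?_⟩
  · refine tendsto_const_nhds.congr' ?_
    have := (hD_fin.preimage (coe_injective.comp nat_injective).injOn).eventually_cofinite_notMem
    rw [Nat.cofinite_eq_atTop] at this
    filter_upwards [this] with n hn
    exact (indicator_of_notMem (s := D) hn h).symm
  · rw [dist_eq_norm, ContinuousMap.norm_le _ hε.le]
    intro p
    by_cases hp : p ∈ D
    · simp [hp, hε.le]
    · simpa [hp] using (not_le.1 hp).le

theorem exists_restrictNat_mem_span_abs_sub_lt (hAD : A.Pairwise fun a b => (a ∩ b).Finite)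
    (f : C(Compactum A, ℝ)) {ε : ℝ} (hε : 0 < ε) :
    ∃ g, restrictNat A g ∈ Submodule.span ℝ (generators A) ∧ |f ∞ - g ∞| < ε ∧
      ∀ a, |f (ofSet a : Psi A) - g (ofSet a : Psi A)| < ε := by
  set v := f ∞
  have hT : {a | ε ≤ |f (ofSet a : Psi A) - v|}.Finite :=
    finite_setOf_ofSet_mem (D := {p | ε ≤ |f p - v|})
      (isClosed_le continuous_const (by fun_prop)) (by simpa [v] using hε)
  let χ (a : A) : C(Compactum A, ℝ) :=
    ⟨(nbhdOf a).indicator 1, (isClopen_nbhdOf hAD a).continuous_indicator continuous_const⟩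
  refine ⟨ContinuousMap.const _ v + ∑ a ∈ hT.toFinset, (f (ofSet a : Psi A) - v) • χ a,
    ?_, by simpa [χ, v] using hε, fun a => ?_⟩
  · simp only [map_add, map_sum, _root_.map_smul]
    refine add_mem ?_ (Submodule.sum_mem _ fun a _ => Submodule.smul_mem _ _ ?_) <;>
      apply Submodule.subset_span
    · exact Or.inl ⟨v, tendsto_const_nhds⟩
    · exact Or.inr ⟨a, a.2, fun n => by simp [χ, indicator_apply]⟩
  · by_cases ha : ε ≤ |f (ofSet a : Psi A) - v|
    · simp [χ, indicator_apply, ha, hε]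
    · simpa [χ, indicator_apply, ha] using not_le.1 ha

theorem exists_restrictNat_mem_span_dist_le (hAD : A.Pairwise fun a b => (a ∩ b).Finite)
    (f : C(Compactum A, ℝ)) {ε : ℝ} (hε : 0 < ε) :
    ∃ g, restrictNat A g ∈ Submodule.span ℝ (generators A) ∧ dist f g ≤ ε := by
  obtain ⟨g₀, hg₀, h_infty, h_ofSet⟩ := exists_restrictNat_mem_span_abs_sub_lt hAD f hε
  obtain ⟨g₁, hg₁, hfg⟩ :=
    exists_restrictNat_tendsto_zero_dist_le (f - g₀) hε h_infty h_ofSet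
  refine ⟨g₀ + g₁, ?_, ?_⟩
  · rw [map_add]
    exact add_mem hg₀ (Submodule.subset_span (Or.inl ⟨0, hg₁⟩))
  · rwa [dist_eq_norm, ← sub_sub, ← dist_eq_norm]

theorem restrictNat_mem_subspace (hAD : A.Pairwise fun a b => (a ∩ b).Finite)
    (f : C(Compactum A, ℝ)) : restrictNat A f ∈ subspace A := by
  rw [subspace, ← SetLike.mem_coe, Submodule.topologicalClosure_coe, Metric.mem_closure_iff]
  intro ε hε
  obtain ⟨g, hg, hfg⟩ := exists_restrictNat_mem_span_dist_le hAD f (half_pos hε)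
  refine ⟨_, hg, ?_⟩
  calc dist (restrictNat A f) (restrictNat A g) = ‖restrictNat A (f - g)‖ := by
        rw [dist_eq_norm, map_sub]
    _ ≤ dist f g := (norm_restrictNat_le _).trans_eq (dist_eq_norm _ _).symm
    _ < ε := hfg.trans_lt (half_lt_self hε)

theorem generators_subset_range_restrictNat (hAD : A.Pairwise fun a b => (a ∩ b).Finite) :
    generators A ⊆ LinearMap.range (restrictNat A) := by
  have := Psi.t2Space hAD
  have hinj := coe_injective.comp (nat_injective (A := A))
  rintro x (⟨l, hx⟩ | ⟨a, ha, hx⟩)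
  · set y : ℕ → ℝ := fun n => x n - l
    have hcont := continuous_extend_zero_of_tendsto hinj isOpen_singleton_nat (y := y)
      (by simpa using hx.sub_const l)
    refine ⟨ContinuousMap.const _ l + ⟨_, hcont⟩, lp.ext (funext fun n => ?_)⟩
    show l + Function.extend (OnePoint.some ∘ nat) y 0 ((OnePoint.some ∘ nat) n) = x n
    rw [hinj.extend_apply]
    ring
  · refine ⟨⟨(nbhdOf ⟨a, ha⟩).indicator 1,
      (isClopen_nbhdOf hAD _).continuous_indicator continuous_const⟩, lp.ext (funext fun n => ?_)⟩
    simp [hx, indicator_apply]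

theorem range_restrictNat (hAD : A.Pairwise fun a b => (a ∩ b).Finite)
    (hinf : ∀ a ∈ A, a.Infinite) (hA : A.Infinite) :
    LinearMap.range (restrictNat A) = subspace A := by
  refine le_antisymm (by rintro _ ⟨f, rfl⟩; exact restrictNat_mem_subspace hAD f) ?_
  refine Submodule.topologicalClosure_minimal _
    (Submodule.span_le.2 (generators_subset_range_restrictNat hAD)) ?_
  rw [LinearMap.coe_range]
  exact (AddMonoidHomClass.isometry_of_norm _ (norm_restrictNat hinf hA)).isClosedEmbedding
    |>.isClosed_range

theorem nonempty_linearIsometryEquiv (hAD : A.Pairwise fun a b => (a ∩ b).Finite)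
    (hinf : ∀ a ∈ A, a.Infinite) (hA : A.Infinite) :
    Nonempty (subspace A ≃ₗᵢ[ℝ] C(Compactum A, ℝ)) :=
  let e : C(Compactum A, ℝ) →ₗᵢ[ℝ] ℓ∞ := ⟨restrictNat A, norm_restrictNat hinf hA⟩
  ⟨(LinearIsometryEquiv.ofEq _ _ (range_restrictNat hAD hinf hA).symm).trans e.equivRange.symm⟩

end Compactum
end Mrowka

open Mrowka Compactum in
/-- let `E` be the closed linear span in `ℓ∞` of the canonical copy of `c`
(convergent sequences) together with the characteristic functions `χ_{N i}` of an infinite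
almost disjoint family `(N i)` of infinite subsets of `ℕ`. Then `E` is isometrically
isomorphic to `C(K_E)` for a compact Hausdorff space `K_E` that is scattered of
Cantor–Bendixson height 3 (a Mrówka–Isbell compactum). -/
theorem stmt14 (I : Type*) [Infinite I] (N : I → Set ℕ)
    (hinf : ∀ i, (N i).Infinite)
    (had : ∀ i j, i ≠ j → (N i ∩ N j).Finite)
    (chi : I → lp (fun _ : ℕ => ℝ) ∞)
    (hchi : ∀ i n, chi i n = if n ∈ N i then (1 : ℝ) else 0)
    (E : Submodule ℝ (lp (fun _ : ℕ => ℝ) ∞))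
    (hE : E = (Submodule.span ℝ
      ({x : lp (fun _ : ℕ => ℝ) ∞ | ∃ l : ℝ, Filter.Tendsto (fun n => x n) Filter.atTop (nhds l)}
        ∪ Set.range chi)).topologicalClosure) :
    ∃ (KE : Type) (_ : TopologicalSpace KE) (_ : CompactSpace KE) (_ : T2Space KE),
      Nonempty (E ≃ₗᵢ[ℝ] C(KE, ℝ)) ∧
      cbDeriv (cbDeriv (cbDeriv (Set.univ : Set KE))) = ∅ ∧
      cbDeriv (cbDeriv (Set.univ : Set KE)) ≠ ∅ := by
  have hN : Function.Injective N := fun i j hij =>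
    by_contra fun hne => hinf j (by simpa [hij] using had i j hne)
  have hAD : (Set.range N).Pairwise fun a b => (a ∩ b).Finite := by
    rintro _ ⟨i, rfl⟩ _ ⟨j, rfl⟩ hij
    exact had i j (ne_of_apply_ne N hij)
  have hinfA : ∀ a ∈ Set.range N, a.Infinite := Set.forall_mem_range.2 hinf
  have hA := Set.infinite_range_of_injective hN
  have hE' : E = subspace (Set.range N) := by
    have : Set.range chi = {x | ∃ a ∈ Set.range N, ∀ n, x n = if n ∈ a then (1 : ℝ) else 0} := by
      ext x
      simp [lp.ext_iff, funext_iff, hchi, eq_comm]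
    rw [hE, this]
    rfl
  have := Psi.t2Space hAD
  obtain ⟨e⟩ := nonempty_linearIsometryEquiv hAD hinfA hA
  refine ⟨Compactum (Set.range N), inferInstance, inferInstance, inferInstance,
    ⟨(LinearIsometryEquiv.ofEq _ _ hE').trans e⟩, ?_, ?_⟩ <;>
    rw [cbDeriv_cbDeriv_univ hinfA hA]
  · exact cbDeriv_singleton _
  · exact singleton_ne_empty _
end
end
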